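/- arXiv:1403.7494 — 3 statements merged into one kernel-verified Lean document; each statement's English description precedes it below -/
import Mathlib

section
/- Let γ : ℝ → ℝ³ be a unit speed spherical curve (‖γ(s)‖ = 1 and ‖γ'(s)‖ = 1 for all s) whose geodesic curvature k_g(s) = ⟨γ(s) × γ'(s), γ''(s)⟩ is a nonzero constant k_g (i.e. γ is a circle on S²). Let b ≠ 0 be a real constant, a ∈ ℝ³ a constant vector, and k : ℝ → ℝ a C¹ function, and define c(s) = b ∫ e^{∫ k(s) ds} γ(s) ds + a (i.e. c'(s) = b e^{K(s)} γ(s) where K' = k). Then c lies on some sphere (there exist m ∈ ℝ³ and r > 0 with ‖c(s) − m‖ = r for all s in the interval of definition) if and only if k(s) = −k_g · tan(k_g (s − b₁)) for some constant b₁ ∈ ℝ. -/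
noncomputable section

/-- ℝ³ as a Euclidean space. -/
abbrev E3 : Type := EuclideanSpace ℝ (Fin 3)

/-- The cross product on ℝ³. -/
def cross3 (u v : E3) : E3 :=
  (WithLp.equiv 2 (Fin 3 → ℝ)).symm
    (crossProduct ((WithLp.equiv 2 (Fin 3 → ℝ)) u) ((WithLp.equiv 2 (Fin 3 → ℝ)) v))

/-- The (real) inner product on ℝ³. -/
def inner3 (u v : E3) : ℝ := inner ℝ u v

/-- The speed ν of a curve. -/
def speed (c : ℝ → E3) (s : ℝ) : ℝ := ‖deriv c s‖

/-- The curvature κ of a curve. -/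
def curvature (c : ℝ → E3) (s : ℝ) : ℝ :=
  ‖cross3 (deriv c s) (deriv (deriv c) s)‖ / ‖deriv c s‖ ^ 3

/-- The torsion τ of a curve. -/
def torsion (c : ℝ → E3) (s : ℝ) : ℝ :=
  inner3 (cross3 (deriv c s) (deriv (deriv c) s)) (deriv (deriv (deriv c)) s) /
    ‖cross3 (deriv c s) (deriv (deriv c) s)‖ ^ 2

/-- σ(s) = (κ²/(ν (κ² + τ²)^{3/2}))·(τ/κ)'(s), the geodesic curvature of the spherical
image of the principal normal indicatrix. -/
def sigmaOf (c : ℝ → E3) (s : ℝ) : ℝ :=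
  (curvature c s) ^ 2 / (speed c s * ((curvature c s) ^ 2 + (torsion c s) ^ 2) ^ ((3 : ℝ) / 2)) *
    deriv (fun t => torsion c t / curvature c t) s

/-- The geodesic curvature k_g(s) = det(γ(s), γ'(s), γ''(s)) = ⟨γ(s) × γ'(s), γ''(s)⟩ of a
unit speed spherical curve γ. -/
def kgOf (γ : ℝ → E3) (s : ℝ) : ℝ :=
  inner3 (cross3 (γ s) (deriv γ s)) (deriv (deriv γ) s)

/-- Build a vector in ℝ³ from coordinates. -/
def mk3 (x y z : ℝ) : E3 := (WithLp.equiv 2 (Fin 3 → ℝ)).symm ![x, y, z]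

end

noncomputable section AuxLemmas

lemma inner3_apply (u v : E3) : inner3 u v = u 0 * v 0 + u 1 * v 1 + u 2 * v 2 := by
  simp [inner3, PiLp.inner_apply, Fin.sum_univ_three]; ring

lemma cross3_apply0 (u v : E3) : cross3 u v 0 = u 1 * v 2 - u 2 * v 1 := by
  simp [cross3, crossProduct]
lemma cross3_apply1 (u v : E3) : cross3 u v 1 = u 2 * v 0 - u 0 * v 2 := by
  simp [cross3, crossProduct]
lemma cross3_apply2 (u v : E3) : cross3 u v 2 = u 0 * v 1 - u 1 * v 0 := by
  simp [cross3, crossProduct]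

lemma smul_apply3 (a : ℝ) (u : E3) (i : Fin 3) : (a • u) i = a * u i := rfl
lemma add_apply3 (u v : E3) (i : Fin 3) : (u + v) i = u i + v i := rfl
lemma sub_apply3 (u v : E3) (i : Fin 3) : (u - v) i = u i - v i := rfl
lemma neg_apply3 (u : E3) (i : Fin 3) : (-u) i = -(u i) := rfl
lemma zero_apply3 (i : Fin 3) : (0 : E3) i = 0 := rfl

lemma inner3_symm (u v : E3) : inner3 u v = inner3 v u := by
  rw [inner3_apply, inner3_apply]; ring

lemma inner3_cross_left (u v : E3) : inner3 (cross3 u v) u = 0 := by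
  rw [inner3_apply, cross3_apply0, cross3_apply1, cross3_apply2]; ring
lemma inner3_cross_right (u v : E3) : inner3 (cross3 u v) v = 0 := by
  rw [inner3_apply, cross3_apply0, cross3_apply1, cross3_apply2]; ring

lemma inner3_smul_left (a : ℝ) (u v : E3) : inner3 (a • u) v = a * inner3 u v := by
  simp only [inner3_apply, smul_apply3]; ring
lemma inner3_smul_right (a : ℝ) (u v : E3) : inner3 u (a • v) = a * inner3 u v := by
  simp only [inner3_apply, smul_apply3]; ring
lemma inner3_add_left (u v x : E3) : inner3 (u + v) x = inner3 u x + inner3 v x := by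
  simp only [inner3_apply, add_apply3]; ring

lemma inner3_add_right (u v x : E3) : inner3 x (u + v) = inner3 x u + inner3 x v := by
  simp only [inner3_apply, add_apply3]; ring

lemma inner3_comb (a d : ℝ) (x y : E3) (hxx : inner3 x x = 1) (hyy : inner3 y y = 1)
    (hxy : inner3 x y = 0) : inner3 (a • x + d • y) (a • x + d • y) = a ^ 2 + d ^ 2 := by
  rw [inner3_apply] at *
  simp only [add_apply3, smul_apply3]
  linear_combination (a^2) * hxx + (d^2) * hyy + (2*a*d) * hxy

lemma norm_sq_inner3 (x : E3) : ‖x‖ ^ 2 = inner3 x x := by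
  rw [inner3]; exact (real_inner_self_eq_norm_sq x).symm

lemma E3_ext {u v : E3} (h0 : u 0 = v 0) (h1 : u 1 = v 1) (h2 : u 2 = v 2) : u = v := by
  ext i; fin_cases i <;> assumption

/-- triple product: u × (u × v) = ⟨u,v⟩ u - ⟨u,u⟩ v -/
lemma cross3_triple (u v : E3) :
    cross3 u (cross3 u v) = (inner3 u v) • u - (inner3 u u) • v := by
  apply E3_ext <;>
    simp only [cross3_apply0, cross3_apply1, cross3_apply2, sub_apply3, smul_apply3,
      inner3_apply] <;> ring

lemma inner3_cross_cross (u v : E3) (hu : inner3 u u = 1) (hv : inner3 v v = 1)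
    (huv : inner3 u v = 0) : inner3 (cross3 u v) (cross3 u v) = 1 := by
  rw [inner3_apply] at *
  rw [cross3_apply0, cross3_apply1, cross3_apply2]
  linear_combination (v 0 * v 0 + v 1 * v 1 + v 2 * v 2) * hu + hv
    - (u 0 * v 0 + u 1 * v 1 + u 2 * v 2) * huv

/-- expansion of any vector in the orthonormal frame u, v, u × v -/
lemma frame_expand (u v x : E3) (hu : inner3 u u = 1) (hv : inner3 v v = 1)
    (huv : inner3 u v = 0) :
    x = (inner3 x u) • u + (inner3 x v) • v + (inner3 x (cross3 u v)) • (cross3 u v) := by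
  rw [inner3_apply] at hu hv huv
  refine E3_ext ?_ ?_ ?_
  · simp only [add_apply3, smul_apply3, cross3_apply0, cross3_apply1, cross3_apply2, inner3_apply]
    linear_combination (v 0 * (x 0 * v 0 + x 1 * v 1 + x 2 * v 2) - x 0 * (v 0 * v 0 + v 1 * v 1 + v 2 * v 2)) * hu + (u 0 * (x 0 * u 0 + x 1 * u 1 + x 2 * u 2) - x 0) * hv + (x 0 * (u 0 * v 0 + u 1 * v 1 + u 2 * v 2) - v 0 * (x 0 * u 0 + x 1 * u 1 + x 2 * u 2) - u 0 * (x 0 * v 0 + x 1 * v 1 + x 2 * v 2)) * huv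
  · simp only [add_apply3, smul_apply3, cross3_apply0, cross3_apply1, cross3_apply2, inner3_apply]
    linear_combination (v 1 * (x 0 * v 0 + x 1 * v 1 + x 2 * v 2) - x 1 * (v 0 * v 0 + v 1 * v 1 + v 2 * v 2)) * hu + (u 1 * (x 0 * u 0 + x 1 * u 1 + x 2 * u 2) - x 1) * hv + (x 1 * (u 0 * v 0 + u 1 * v 1 + u 2 * v 2) - v 1 * (x 0 * u 0 + x 1 * u 1 + x 2 * u 2) - u 1 * (x 0 * v 0 + x 1 * v 1 + x 2 * v 2)) * huv
  · simp only [add_apply3, smul_apply3, cross3_apply0, cross3_apply1, cross3_apply2, inner3_apply]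
    linear_combination (v 2 * (x 0 * v 0 + x 1 * v 1 + x 2 * v 2) - x 2 * (v 0 * v 0 + v 1 * v 1 + v 2 * v 2)) * hu + (u 2 * (x 0 * u 0 + x 1 * u 1 + x 2 * u 2) - x 2) * hv + (x 2 * (u 0 * v 0 + u 1 * v 1 + u 2 * v 2) - v 2 * (x 0 * u 0 + x 1 * u 1 + x 2 * u 2) - u 2 * (x 0 * v 0 + x 1 * v 1 + x 2 * v 2)) * huv

lemma hasDerivAt_comp3 {f : ℝ → E3} {f' : E3} {s : ℝ} (hf : HasDerivAt f f' s) (i : Fin 3) :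
    HasDerivAt (fun t => f t i) (f' i) s := by
  exact (EuclideanSpace.proj (𝕜 := ℝ) i).hasFDerivAt.comp_hasDerivAt s hf

lemma decomp3 (x : E3) : x = x 0 • mk3 1 0 0 + x 1 • mk3 0 1 0 + x 2 • mk3 0 0 1 := by
  ext i; fin_cases i <;> simp [mk3]

lemma hasDerivAt_E3 {f : ℝ → E3} {f' : E3} {s : ℝ}
    (h : ∀ i : Fin 3, HasDerivAt (fun t => f t i) (f' i) s) : HasDerivAt f f' s := by
  have h' : HasDerivAt (fun t => (f t 0) • mk3 1 0 0 + (f t 1) • mk3 0 1 0 + (f t 2) • mk3 0 0 1)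
      ((f' 0) • mk3 1 0 0 + (f' 1) • mk3 0 1 0 + (f' 2) • mk3 0 0 1) s :=
    (((h 0).smul_const _).add ((h 1).smul_const _)).add ((h 2).smul_const _)
  have e1 : (fun t => (f t 0) • mk3 (1:ℝ) 0 0 + (f t 1) • mk3 0 1 0 + (f t 2) • mk3 0 0 1) = f := by
    funext t; exact (decomp3 (f t)).symm
  have e2 : (f' 0) • mk3 (1:ℝ) 0 0 + (f' 1) • mk3 0 1 0 + (f' 2) • mk3 0 0 1 = f' :=
    (decomp3 f').symm
  rwa [e1, e2] at h'

lemma HasDerivAt.cross3' {f g : ℝ → E3} {f' g' : E3} {s : ℝ}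
    (hf : HasDerivAt f f' s) (hg : HasDerivAt g g' s) :
    HasDerivAt (fun t => cross3 (f t) (g t)) (cross3 f' (g s) + cross3 (f s) g') s := by
  have h0 := hasDerivAt_comp3 hf 0
  have h1 := hasDerivAt_comp3 hf 1
  have h2 := hasDerivAt_comp3 hf 2
  have g0 := hasDerivAt_comp3 hg 0
  have g1 := hasDerivAt_comp3 hg 1
  have g2 := hasDerivAt_comp3 hg 2
  apply hasDerivAt_E3
  intro i
  fin_cases i
  · simp only [Fin.zero_eta, Fin.mk_one, Fin.reduceFinMk, cross3_apply0, add_apply3]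
    refine ((h1.mul g2).sub (h2.mul g1)).congr_deriv ?_; ring
  · simp only [Fin.zero_eta, Fin.mk_one, Fin.reduceFinMk, cross3_apply1, add_apply3]
    refine ((h2.mul g0).sub (h0.mul g2)).congr_deriv ?_; ring
  · simp only [Fin.zero_eta, Fin.mk_one, Fin.reduceFinMk, cross3_apply2, add_apply3]
    refine ((h0.mul g1).sub (h1.mul g0)).congr_deriv ?_; ring

lemma hasDerivAt_inner3 {f g : ℝ → E3} {f' g' : E3} {s : ℝ}
    (hf : HasDerivAt f f' s) (hg : HasDerivAt g g' s) :
    HasDerivAt (fun t => inner3 (f t) (g t)) (inner3 (f s) g' + inner3 f' (g s)) s :=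
  HasDerivAt.inner ℝ hf hg

/-- a function with zero derivative on a convex set is constant there -/
lemma const_of_derivZero {V : Type*} [NormedAddCommGroup V] [NormedSpace ℝ V] {F : ℝ → V}
    {I : Set ℝ} (hI : Convex ℝ I) (hd : ∀ s ∈ I, HasDerivAt F 0 s) :
    ∀ {x y : ℝ}, x ∈ I → y ∈ I → F x = F y := by
  intro x y hx hy
  have key : ‖F y - F x‖ ≤ 0 * ‖y - x‖ := by
    apply Convex.norm_image_sub_le_of_norm_hasFDerivWithin_le
      (f' := fun _ => (0 : ℝ →L[ℝ] V)) (fun z hz => ?_) (fun z _ => by simp) hI hx hy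
    have h := (hd z hz).hasFDerivAt.hasFDerivWithinAt (s := I)
    have e : (ContinuousLinearMap.toSpanSingleton ℝ (0 : V)) = 0 := by
      ext t; simp
    rwa [e] at h
  rw [zero_mul] at key
  have h0 : F y - F x = 0 := by
    rw [← norm_le_zero_iff]; exact key
  exact (sub_eq_zero.mp h0).symm

end AuxLemmas

open scoped ContDiff

/-- If γ is a unit-speed circle on the unit sphere (constant nonzero geodesic
curvature k_g) and c' = b e^K γ with K' = k, then c lies on some sphere iff
k(s) = −k_g tan(k_g (s − b₁)) for some constant b₁. -/
theorem sphericalHelix_iff_tan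
    (γ : ℝ → E3) (hγ : ContDiff ℝ (⊤ : ℕ∞) γ)
    (hsph : ∀ s, ‖γ s‖ = 1) (hunit : ∀ s, ‖deriv γ s‖ = 1)
    (kg : ℝ) (hkg : kg ≠ 0) (hkgconst : ∀ s, kgOf γ s = kg)
    (b : ℝ) (hb : b ≠ 0)
    (k K : ℝ → ℝ) (hk : ContDiff ℝ 1 k) (hK : ∀ s, HasDerivAt K (k s) s)
    (c : ℝ → E3) (hc : ∀ s, HasDerivAt c ((b * Real.exp (K s)) • γ s) s)
    (I : Set ℝ) (hIne : I.Nonempty) (hIopen : IsOpen I) (hIconn : I.OrdConnected) :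
    (∃ m : E3, ∃ r : ℝ, 0 < r ∧ ∀ s ∈ I, ‖c s - m‖ = r) ↔
      (∃ b₁ : ℝ, ∀ s ∈ I, k s = -kg * Real.tan (kg * (s - b₁))) := by
  have hIconv : Convex ℝ I := convex_iff_ordConnected.mpr hIconn
  -- basic smoothness
  have hgi : ContDiff ℝ ∞ γ := hγ.of_le (by simp)
  set T : ℝ → E3 := deriv γ with hTdef
  have hγdiff : Differentiable ℝ γ := hgi.differentiable (by simp)
  have hTd : ∀ s, HasDerivAt γ (T s) s := fun s => (hγdiff s).hasDerivAt
  have hTsmooth : ContDiff ℝ ∞ T := (contDiff_infty_iff_deriv.mp hgi).2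
  set γ2 : ℝ → E3 := deriv T with hγ2def
  have hTdiff : Differentiable ℝ T := hTsmooth.differentiable (by simp)
  have hT2 : ∀ s, HasDerivAt T (γ2 s) s := fun s => (hTdiff s).hasDerivAt
  set w : ℝ → E3 := fun s => cross3 (γ s) (T s) with hwdef
  have hkd : ∀ s, HasDerivAt k (deriv k s) s := fun s => ((hk.differentiable one_ne_zero) s).hasDerivAt
  -- frame inner products
  have hγγ : ∀ s, inner3 (γ s) (γ s) = 1 := by
    intro s; rw [← norm_sq_inner3, hsph s]; norm_num
  have hTT : ∀ s, inner3 (T s) (T s) = 1 := by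
    intro s; rw [← norm_sq_inner3, hunit s]; norm_num
  have hγT : ∀ s, inner3 (γ s) (T s) = 0 := by
    intro s
    have h1 : HasDerivAt (fun t => inner3 (γ t) (γ t))
        (inner3 (γ s) (T s) + inner3 (T s) (γ s)) s := hasDerivAt_inner3 (hTd s) (hTd s)
    have h2 : HasDerivAt (fun t => inner3 (γ t) (γ t)) 0 s := by
      have : (fun t => inner3 (γ t) (γ t)) = fun _ => (1:ℝ) := funext fun t => hγγ t
      rw [this]; exact hasDerivAt_const s 1
    have := h1.unique h2
    rw [inner3_symm (T s) (γ s)] at this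
    linarith
  have hTγ2 : ∀ s, inner3 (T s) (γ2 s) = 0 := by
    intro s
    have h1 : HasDerivAt (fun t => inner3 (T t) (T t))
        (inner3 (T s) (γ2 s) + inner3 (γ2 s) (T s)) s := hasDerivAt_inner3 (hT2 s) (hT2 s)
    have h2 : HasDerivAt (fun t => inner3 (T t) (T t)) 0 s := by
      have : (fun t => inner3 (T t) (T t)) = fun _ => (1:ℝ) := funext fun t => hTT t
      rw [this]; exact hasDerivAt_const s 1
    have := h1.unique h2
    rw [inner3_symm (γ2 s) (T s)] at this
    linarith
  have hγγ2 : ∀ s, inner3 (γ s) (γ2 s) = -1 := by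
    intro s
    have h1 : HasDerivAt (fun t => inner3 (γ t) (T t))
        (inner3 (γ s) (γ2 s) + inner3 (T s) (T s)) s := hasDerivAt_inner3 (hTd s) (hT2 s)
    have h2 : HasDerivAt (fun t => inner3 (γ t) (T t)) 0 s := by
      have : (fun t => inner3 (γ t) (T t)) = fun _ => (0:ℝ) := funext fun t => hγT t
      rw [this]; exact hasDerivAt_const s 0
    have := h1.unique h2
    rw [hTT s] at this
    linarith
  have hwγ : ∀ s, inner3 (w s) (γ s) = 0 := fun s => inner3_cross_left _ _
  have hwT : ∀ s, inner3 (w s) (T s) = 0 := fun s => inner3_cross_right _ _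
  have hww : ∀ s, inner3 (w s) (w s) = 1 := fun s =>
    inner3_cross_cross _ _ (hγγ s) (hTT s) (hγT s)
  have hwγ2 : ∀ s, inner3 (w s) (γ2 s) = kg := fun s => hkgconst s
  -- Darboux-type frame equations
  have hframe : ∀ s, γ2 s = (-1 : ℝ) • γ s + kg • w s := by
    intro s
    have h := frame_expand (γ s) (T s) (γ2 s) (hγγ s) (hTT s) (hγT s)
    rw [inner3_symm (γ2 s) (γ s), inner3_symm (γ2 s) (T s), inner3_symm (γ2 s) (cross3 (γ s) (T s))] at h
    rw [show cross3 (γ s) (T s) = w s from rfl] at h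
    rw [hγγ2 s, hTγ2 s, hwγ2 s] at h
    rw [h]; rw [zero_smul]; abel
  have hwderiv : ∀ s, HasDerivAt w ((-kg) • T s) s := by
    intro s
    have h := HasDerivAt.cross3' (hTd s) (hT2 s)
    have e : cross3 (T s) (T s) + cross3 (γ s) (γ2 s) = (-kg) • T s := by
      rw [hframe s]
      have e2 : cross3 (γ s) ((-1 : ℝ) • γ s + kg • w s)
          = (-1 : ℝ) • cross3 (γ s) (γ s) + kg • cross3 (γ s) (w s) := by
        apply E3_ext <;>
          simp only [cross3_apply0, cross3_apply1, cross3_apply2, add_apply3, smul_apply3] <;> ring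
      rw [e2]
      have e3 : cross3 (γ s) (w s) = (inner3 (γ s) (T s)) • γ s - (inner3 (γ s) (γ s)) • T s :=
        cross3_triple (γ s) (T s)
      rw [e3, hγT s, hγγ s]
      have e4 : cross3 (T s) (T s) = 0 := by
        apply E3_ext <;> simp only [cross3_apply0, cross3_apply1, cross3_apply2, zero_apply3] <;> ring
      have e5 : cross3 (γ s) (γ s) = 0 := by
        apply E3_ext <;> simp only [cross3_apply0, cross3_apply1, cross3_apply2, zero_apply3] <;> ring
      rw [e4, e5]
      apply E3_ext <;>
        simp only [add_apply3, smul_apply3, sub_apply3, zero_apply3, neg_apply3] <;> ring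
    rwa [e] at h
  -- derivative comparison on the open set I
  have derivEq : ∀ (f g : ℝ → ℝ) (f' g' : ℝ) (s : ℝ), s ∈ I → (∀ t ∈ I, f t = g t) →
      HasDerivAt f f' s → HasDerivAt g g' s → f' = g' := by
    intro f g f' g' s hs hfg hf hg
    refine hf.unique (hg.congr_of_eventuallyEq ?_)
    filter_upwards [hIopen.mem_nhds hs] with t ht
    exact hfg t ht
  have hbeK : ∀ s, HasDerivAt (fun t => b * Real.exp (K t)) (b * Real.exp (K s) * k s) s := by
    intro s
    have := ((hK s).exp.const_mul b)
    exact this.congr_deriv (by ring)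
  have hbene : ∀ s, b * Real.exp (K s) ≠ 0 := fun s => mul_ne_zero hb (Real.exp_ne_zero _)
  obtain ⟨s₀, hs₀⟩ := hIne
  constructor
  · rintro ⟨m, r, hr, hsphere⟩
    set F : ℝ → E3 := fun s => c s - m with hFdef
    have hFd : ∀ s, HasDerivAt F ((b * Real.exp (K s)) • γ s) s := fun s => (hc s).sub_const m
    set p : ℝ → ℝ := fun s => inner3 (γ s) (F s) with hpdef
    set q : ℝ → ℝ := fun s => inner3 (T s) (F s) with hqdef
    set om : ℝ → ℝ := fun s => inner3 (w s) (F s) with homdef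
    -- p = 0 on I
    have hp0 : ∀ s ∈ I, p s = 0 := by
      intro s hs
      have hn : HasDerivAt (fun t => inner3 (F t) (F t)) (2 * (b * Real.exp (K s)) * p s) s := by
        have h := hasDerivAt_inner3 (hFd s) (hFd s)
        convert h using 1
        rw [inner3_smul_right, inner3_smul_left, inner3_symm (F s) (γ s)]
        simp only [hpdef]; ring
      have hcn : (2 * (b * Real.exp (K s)) * p s) = 0 := by
        refine derivEq _ (fun _ => r ^ 2) _ 0 s hs ?_ hn (hasDerivAt_const s (r^2))
        intro t ht
        rw [← norm_sq_inner3, hsphere t ht]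
      have h2 : (2 * (b * Real.exp (K s))) ≠ 0 := by
        simp [hbene s]
      exact (mul_eq_zero.mp hcn).resolve_left h2
    -- q = -(b e^K) on I
    have hq0 : ∀ s ∈ I, q s = -(b * Real.exp (K s)) := by
      intro s hs
      have hp' : HasDerivAt p (b * Real.exp (K s) + q s) s := by
        have h := hasDerivAt_inner3 (hTd s) (hFd s)
        convert h using 1
        rw [inner3_smul_right, hγγ s]
        simp only [hqdef]; ring
      have := derivEq p (fun _ => 0) _ 0 s hs hp0 hp' (hasDerivAt_const s 0)
      linarith
    -- ω = -(b e^K k)/kg on I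
    have hom0 : ∀ s ∈ I, om s = -(b * Real.exp (K s) * k s) / kg := by
      intro s hs
      have hq' : HasDerivAt q (-(p s) + kg * om s) s := by
        have h := hasDerivAt_inner3 (hT2 s) (hFd s)
        convert h using 1
        rw [inner3_smul_right, inner3_symm (T s) (γ s), hγT s, hframe s,
          inner3_add_left, inner3_smul_left, inner3_smul_left]
        simp only [hpdef, homdef]; ring
      have hg' : HasDerivAt (fun t => -(b * Real.exp (K t))) (-(b * Real.exp (K s) * k s)) s :=
        (hbeK s).neg
      have := derivEq q (fun t => -(b * Real.exp (K t))) _ _ s hs hq0 hq' hg'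
      rw [hp0 s hs] at this
      field_simp at this ⊢
      linarith
    -- the ODE for k on I
    have hODE : ∀ s ∈ I, deriv k s = -((k s) ^ 2 + kg ^ 2) := by
      intro s hs
      have hom' : HasDerivAt om (-kg * q s) s := by
        have h := hasDerivAt_inner3 (hwderiv s) (hFd s)
        convert h using 1
        rw [inner3_smul_right, hwγ s, inner3_smul_left]
        simp only [hqdef]; ring
      have hg' : HasDerivAt (fun t => -(b * Real.exp (K t) * k t) / kg)
          (-(b * Real.exp (K s) * k s * k s + b * Real.exp (K s) * deriv k s) / kg) s := by
        have h1 := ((hbeK s).mul (hkd s)).neg.div_const kg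
        exact h1
      have heq := derivEq om _ _ _ s hs hom0 hom' hg'
      rw [hq0 s hs] at heq
      have hbe := hbene s
      have h2 : (-kg * -(b * Real.exp (K s))) * kg
          = -(b * Real.exp (K s) * k s * k s + b * Real.exp (K s) * deriv k s) := by
        rw [heq, div_mul_cancel₀ _ hkg]
      have h5 : b * Real.exp (K s) * (deriv k s) = b * Real.exp (K s) * (-((k s)^2 + kg^2)) := by
        linear_combination h2
      exact mul_left_cancel₀ hbe h5
    -- integrate: arctan(-k/kg) has derivative kg on I
    set u : ℝ → ℝ := fun s => Real.arctan (-(k s) / kg) with hudef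
    have hu : ∀ s ∈ I, HasDerivAt (fun t => u t - kg * t) 0 s := by
      intro s hs
      have hin : HasDerivAt (fun t => -(k t) / kg) (-(deriv k s) / kg) s :=
        (hkd s).neg.div_const kg
      have harc := (Real.hasDerivAt_arctan (-(k s) / kg)).comp s hin
      have hval : (1 / (1 + (-(k s) / kg) ^ 2)) * (-(deriv k s) / kg) = kg := by
        rw [hODE s hs]
        have h1 : (1 + (-(k s) / kg) ^ 2) ≠ 0 := by positivity
        field_simp
        ring
      have hu1 : HasDerivAt u kg s := by
        have := harc
        rw [Function.comp_def] at this
        rw [hval] at this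
        exact this
      exact (hu1.sub ((hasDerivAt_id s).const_mul kg)).congr_deriv (by simp)
    have hconstG : ∀ s ∈ I, u s - kg * s = u s₀ - kg * s₀ := fun s hs =>
      const_of_derivZero hIconv hu hs hs₀
    refine ⟨-(u s₀ - kg * s₀)/kg, ?_⟩
    intro s hs
    have h1 : kg * (s - -(u s₀ - kg * s₀)/kg) = u s := by
      have := hconstG s hs
      field_simp
      linarith
    rw [h1, hudef]
    rw [Real.tan_arctan]
    field_simp
  · rintro ⟨b₁, hkeq⟩
    -- Step 1: no poles of tan inside I
    have hcos : ∀ s ∈ I, Real.cos (kg * (s - b₁)) ≠ 0 := by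
      intro s0 hs0 hzero
      have htan := Real.tendsto_abs_tan_of_cos_eq_zero hzero
      have hφc : Filter.Tendsto (fun s => kg * (s - b₁)) (nhdsWithin s0 {s0}ᶜ)
          (nhds (kg * (s0 - b₁))) :=
        (((continuous_const.mul (continuous_id.sub continuous_const)).tendsto s0)).mono_left
          nhdsWithin_le_nhds
      have hφne : Filter.Tendsto (fun s => kg * (s - b₁)) (nhdsWithin s0 {s0}ᶜ)
          (Filter.principal {kg * (s0 - b₁)}ᶜ) := by
        rw [Filter.tendsto_principal]
        refine Filter.eventually_of_mem self_mem_nhdsWithin fun x hx => ?_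
        simp only [Set.mem_compl_iff, Set.mem_singleton_iff] at hx ⊢
        intro hcontr
        apply hx
        have h1 : x - b₁ = s0 - b₁ := mul_left_cancel₀ hkg hcontr
        linarith
      have hφ : Filter.Tendsto (fun s => kg * (s - b₁)) (nhdsWithin s0 {s0}ᶜ)
          (nhdsWithin (kg * (s0 - b₁)) {kg * (s0 - b₁)}ᶜ) := by
        exact Filter.tendsto_inf.mpr ⟨hφc, hφne⟩
      have h1 := htan.comp hφ
      have h2 := Filter.Tendsto.const_mul_atTop (abs_pos.mpr hkg) h1
      have h3 : Filter.Tendsto (fun s => |k s|) (nhdsWithin s0 {s0}ᶜ) Filter.atTop := by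
        refine h2.congr' ?_
        filter_upwards [nhdsWithin_le_nhds (hIopen.mem_nhds hs0)] with t ht
        rw [hkeq t ht, Function.comp_apply, abs_mul, abs_neg]
      have h4 : Filter.Tendsto (fun s => |k s|) (nhdsWithin s0 {s0}ᶜ) (nhds |k s0|) :=
        (((hk.continuous.tendsto s0)).mono_left nhdsWithin_le_nhds).abs
      exact not_tendsto_nhds_of_tendsto_atTop h3 _ h4
    -- Step 2: the ODE for k on I
    have hODE : ∀ s ∈ I, deriv k s = -((k s) ^ 2 + kg ^ 2) := by
      intro s hs
      have hφd : HasDerivAt (fun t => kg * (t - b₁)) kg s := by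
        simpa using ((hasDerivAt_id s).sub_const b₁).const_mul kg
      have htand := (Real.hasDerivAt_tan (hcos s hs)).comp s hφd
      have hfd : HasDerivAt (fun t => -kg * Real.tan (kg * (t - b₁)))
          (-kg * (1 / Real.cos (kg * (s - b₁)) ^ 2 * kg)) s := by
        exact htand.const_mul (-kg)
      have hkder : HasDerivAt k (-kg * (1 / Real.cos (kg * (s - b₁)) ^ 2 * kg)) s := by
        refine hfd.congr_of_eventuallyEq ?_
        filter_upwards [hIopen.mem_nhds hs] with t ht
        exact hkeq t ht
      have hder := (hkd s).unique hkder
      rw [hder]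
      have hc2 := hcos s hs
      have htan2 : Real.tan (kg * (s - b₁)) = -(k s) / kg := by
        rw [hkeq s hs]; field_simp
      have hsc : Real.sin (kg * (s - b₁)) ^ 2 + Real.cos (kg * (s - b₁)) ^ 2 = 1 :=
        Real.sin_sq_add_cos_sq _
      have h2 : 1 / Real.cos (kg * (s - b₁)) ^ 2 = Real.tan (kg * (s - b₁)) ^ 2 + 1 := by
        rw [Real.tan_eq_sin_div_cos]
        field_simp
        exact hsc.symm
      rw [h2, htan2]
      field_simp
    -- Step 3: the center
    set M : ℝ → E3 := fun s => c s + (b * Real.exp (K s)) • T s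
      + (b * Real.exp (K s) * k s / kg) • w s with hMdef
    have hMd : ∀ s ∈ I, HasDerivAt M 0 s := by
      intro s hs
      have hδd : HasDerivAt (fun t => b * Real.exp (K t) * k t / kg)
          (-(b * Real.exp (K s) * kg)) s := by
        have h1 := ((hbeK s).mul (hkd s)).div_const kg
        have h2 : (b * Real.exp (K s) * k s * k s + b * Real.exp (K s) * deriv k s) / kg
            = -(b * Real.exp (K s) * kg) := by
          rw [hODE s hs]; field_simp; ring
        rwa [h2] at h1
      have h2 := ((hc s).add ((hbeK s).smul (hT2 s))).add (hδd.smul (hwderiv s))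
      refine h2.congr_deriv ?_
      rw [hframe s]
      apply E3_ext <;>
        simp only [add_apply3, smul_apply3, zero_apply3, neg_apply3, sub_apply3] <;>
        field_simp <;> ring
    have hMconst : ∀ s ∈ I, M s = M s₀ := fun s hs => const_of_derivZero hIconv hMd hs hs₀
    -- the radius
    have hdiff : ∀ s, c s - M s = (-(b * Real.exp (K s))) • T s
        + (-(b * Real.exp (K s) * k s / kg)) • w s := by
      intro s
      apply E3_ext <;>
        simp only [hMdef, add_apply3, smul_apply3, sub_apply3, neg_apply3] <;> ring
    have hTw : ∀ s, inner3 (T s) (w s) = 0 := fun s => by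
      rw [inner3_symm]; exact hwT s
    have hval : ∀ s, inner3 (c s - M s) (c s - M s)
        = (b * Real.exp (K s)) ^ 2 + (b * Real.exp (K s) * k s / kg) ^ 2 := by
      intro s
      rw [hdiff s, inner3_comb _ _ _ _ (hTT s) (hww s) (hTw s)]
      ring
    have hpos : 0 < inner3 (c s₀ - M s₀) (c s₀ - M s₀) := by
      rw [hval s₀]
      have ha : b * Real.exp (K s₀) ≠ 0 := hbene s₀
      have h1 : 0 < (b * Real.exp (K s₀)) ^ 2 :=
        lt_of_le_of_ne (sq_nonneg _) (Ne.symm (pow_ne_zero 2 ha))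
      nlinarith [sq_nonneg (b * Real.exp (K s₀) * k s₀ / kg)]
    refine ⟨M s₀, Real.sqrt (inner3 (c s₀ - M s₀) (c s₀ - M s₀)), Real.sqrt_pos.mpr hpos, ?_⟩
    intro s hs
    -- the distance function is constant on I
    have hφd : ∀ t ∈ I, HasDerivAt (fun x => inner3 (c x - M s₀) (c x - M s₀)) 0 t := by
      intro t ht
      have hFd : HasDerivAt (fun x => c x - M s₀) ((b * Real.exp (K t)) • γ t) t :=
        (hc t).sub_const (M s₀)
      have h := hasDerivAt_inner3 hFd hFd
      have horth : inner3 (γ t) (c t - M s₀) = 0 := by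
        rw [← hMconst t ht, hdiff t, inner3_add_right, inner3_smul_right, inner3_smul_right,
          hγT t]
        have : inner3 (γ t) (w t) = 0 := by rw [inner3_symm]; exact hwγ t
        rw [this]; ring
      have hz : inner3 (c t - M s₀) ((b * Real.exp (K t)) • γ t)
          + inner3 ((b * Real.exp (K t)) • γ t) (c t - M s₀) = 0 := by
        rw [inner3_smul_right, inner3_smul_left, inner3_symm (c t - M s₀) (γ t), horth]
        ring
      rwa [hz] at h
    have hφconst := const_of_derivZero hIconv hφd hs hs₀
    have hnorm : ‖c s - M s₀‖ = Real.sqrt (inner3 (c s - M s₀) (c s - M s₀)) := by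
      rw [← norm_sq_inner3, Real.sqrt_sq (norm_nonneg _)]
    rw [hnorm, hφconst]
end

section
/- Let γ : ℝ → ℝ³ be a unit speed spherical curve, let b > 0, a ∈ ℝ³, k : ℝ → ℝ a C¹ function with antiderivative K, and define c by c'(s) = b e^{K(s)} γ(s). Then the unit tangent vector of c equals γ, i.e. T(s) = c'(s)/‖c'(s)‖ = γ(s) for all s, and the binormal B(s) = (c'(s) × c''(s))/‖c'(s) × c''(s)‖ = γ(s) × γ'(s) = p(s); hence the Frenet frame {T, N, B} of c coincides with the Sabban frame {γ, t, p} of γ (so γ is the tangent indicatrix of c). -/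
open Matrix

private lemma my_cross_cross_expand (u v w : Fin 3 → ℝ) :
    (u ⨯₃ v) ⨯₃ w = (u ⬝ᵥ w) • v - (v ⬝ᵥ w) • u := by
  simp_rw [cross_apply, vec3_dotProduct]
  funext i
  fin_cases i <;> simp <;> ring

private lemma my_inner3_eq_dot (u v : E3) :
    inner3 u v = (WithLp.equiv 2 (Fin 3 → ℝ) u) ⬝ᵥ (WithLp.equiv 2 (Fin 3 → ℝ) v) := by
  simp [inner3, PiLp.inner_apply, dotProduct, mul_comm]

private lemma my_cross3_comb (a cc d : ℝ) (u v : E3) :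
    cross3 (a • u) (d • v + cc • u) = (a * d) • cross3 u v := by
  show (WithLp.equiv 2 (Fin 3 → ℝ)).symm
      (crossProduct (a • (WithLp.equiv 2 (Fin 3 → ℝ) u))
        (d • (WithLp.equiv 2 (Fin 3 → ℝ) v) + cc • (WithLp.equiv 2 (Fin 3 → ℝ) u))) = _
  rw [show cross3 u v = (WithLp.equiv 2 (Fin 3 → ℝ)).symm
      (crossProduct ((WithLp.equiv 2 (Fin 3 → ℝ)) u) ((WithLp.equiv 2 (Fin 3 → ℝ)) v)) from rfl]
  rw [show (a * d) • (WithLp.equiv 2 (Fin 3 → ℝ)).symm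
      (crossProduct ((WithLp.equiv 2 (Fin 3 → ℝ)) u) ((WithLp.equiv 2 (Fin 3 → ℝ)) v)) =
      (WithLp.equiv 2 (Fin 3 → ℝ)).symm ((a * d) •
      (crossProduct ((WithLp.equiv 2 (Fin 3 → ℝ)) u) ((WithLp.equiv 2 (Fin 3 → ℝ)) v))) from rfl]
  congr 1
  simp [map_add, _root_.map_smul, LinearMap.add_apply, LinearMap.smul_apply, cross_self,
    smul_smul, mul_comm]

private lemma my_cross3_cross3 (u v w : E3) :
    cross3 (cross3 u v) w = inner3 u w • v - inner3 v w • u := by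
  show (WithLp.equiv 2 (Fin 3 → ℝ)).symm
      (crossProduct ((WithLp.equiv 2 (Fin 3 → ℝ)) (cross3 u v)) ((WithLp.equiv 2 (Fin 3 → ℝ)) w)) = _
  rw [show (WithLp.equiv 2 (Fin 3 → ℝ)) (cross3 u v) =
      crossProduct ((WithLp.equiv 2 (Fin 3 → ℝ)) u) ((WithLp.equiv 2 (Fin 3 → ℝ)) v) from
    Equiv.apply_symm_apply _ _]
  rw [my_cross_cross_expand, my_inner3_eq_dot, my_inner3_eq_dot]
  rfl

private lemma my_inner3_cross (u v w x : E3) :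
    inner3 (cross3 u v) (cross3 w x) =
      inner3 u w * inner3 v x - inner3 u x * inner3 v w := by
  simp only [my_inner3_eq_dot, cross3, Equiv.apply_symm_apply]
  exact cross_dot_cross _ _ _ _

/-- For c with c' = b e^K γ, b > 0: the unit tangent of c is γ, the binormal
is p = γ × γ', and the principal normal N = B × T is γ'; so the Frenet frame of c coincides
with the Sabban frame of γ (γ is the tangent indicatrix of c). -/
theorem frenet_frame_eq_sabban_frame
    (γ : ℝ → E3) (hγ : ContDiff ℝ (⊤ : ℕ∞) γ)
    (hsph : ∀ s, ‖γ s‖ = 1) (hunit : ∀ s, ‖deriv γ s‖ = 1)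
    (b : ℝ) (hb : 0 < b)
    (k K : ℝ → ℝ) (hk : ContDiff ℝ 1 k) (hK : ∀ s, HasDerivAt K (k s) s)
    (c : ℝ → E3) (hc : ∀ s, HasDerivAt c ((b * Real.exp (K s)) • γ s) s) :
    ∀ s : ℝ,
      (‖deriv c s‖)⁻¹ • deriv c s = γ s ∧
      (‖cross3 (deriv c s) (deriv (deriv c) s)‖)⁻¹ • cross3 (deriv c s) (deriv (deriv c) s) =
        cross3 (γ s) (deriv γ s) ∧
      cross3
        ((‖cross3 (deriv c s) (deriv (deriv c) s)‖)⁻¹ • cross3 (deriv c s) (deriv (deriv c) s))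
        ((‖deriv c s‖)⁻¹ • deriv c s) = deriv γ s := by
  intro s
  have hγd : ∀ t, HasDerivAt γ (deriv γ t) t :=
    fun t => (hγ.differentiable (by simp) t).hasDerivAt
  -- orthogonality of γ and γ'
  have hortho : inner3 (γ s) (deriv γ s) = 0 := by
    have h1 : HasDerivAt (fun t => (inner ℝ (γ t) (γ t) : ℝ))
        ((inner ℝ (γ s) (deriv γ s) : ℝ) + inner ℝ (deriv γ s) (γ s)) s :=
      (hγd s).inner ℝ (hγd s)
    have h2 : (fun t => (inner ℝ (γ t) (γ t) : ℝ)) = fun _ => 1 := by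
      funext t
      rw [real_inner_self_eq_norm_sq, hsph t]; norm_num
    rw [h2] at h1
    have h3 := h1.unique (hasDerivAt_const s 1)
    have h4 : (inner ℝ (γ s) (deriv γ s) : ℝ) = inner ℝ (deriv γ s) (γ s) := real_inner_comm _ _
    unfold inner3
    linarith
  have hγγ : inner3 (γ s) (γ s) = 1 := by
    unfold inner3; rw [real_inner_self_eq_norm_sq, hsph s]; norm_num
  have hγ'γ : inner3 (deriv γ s) (γ s) = 0 := by
    unfold inner3 at *; rw [real_inner_comm]; exact hortho
  have hγ'γ' : inner3 (deriv γ s) (deriv γ s) = 1 := by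
    unfold inner3; rw [real_inner_self_eq_norm_sq, hunit s]; norm_num
  set r : ℝ := b * Real.exp (K s) with hrdef
  have hr0 : 0 < r := mul_pos hb (Real.exp_pos _)
  have hdc : deriv c = fun t => (b * Real.exp (K t)) • γ t := funext fun t => (hc t).deriv
  have hdcs : deriv c s = r • γ s := by rw [hdc]
  have hC2 : HasDerivAt (fun t => (b * Real.exp (K t)) • γ t)
      ((b * Real.exp (K s)) • deriv γ s + (b * (Real.exp (K s) * k s)) • γ s) s :=
    (((hK s).exp).const_mul b).smul (hγd s)
  have hddcs : deriv (deriv c) s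
      = r • deriv γ s + (b * (Real.exp (K s) * k s)) • γ s := by
    rw [hdc]; exact hC2.deriv
  -- cross product of first two derivatives
  have hcross : cross3 (deriv c s) (deriv (deriv c) s)
      = (r * r) • cross3 (γ s) (deriv γ s) := by
    rw [hdcs, hddcs]
    exact my_cross3_comb r (b * (Real.exp (K s) * k s)) r (γ s) (deriv γ s)
  -- norm of γ × γ'
  have hp1 : ‖cross3 (γ s) (deriv γ s)‖ = 1 := by
    have h := my_inner3_cross (γ s) (deriv γ s) (γ s) (deriv γ s)
    rw [hγγ, hγ'γ', hortho, hγ'γ] at h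
    have h2 : inner3 (cross3 (γ s) (deriv γ s)) (cross3 (γ s) (deriv γ s))
        = ‖cross3 (γ s) (deriv γ s)‖ ^ 2 := real_inner_self_eq_norm_sq _
    nlinarith [norm_nonneg (cross3 (γ s) (deriv γ s))]
  -- norms
  have hn1 : ‖deriv c s‖ = r := by
    rw [hdcs, norm_smul, hsph s, Real.norm_eq_abs, abs_of_pos hr0, mul_one]
  have hn2 : ‖cross3 (deriv c s) (deriv (deriv c) s)‖ = r * r := by
    rw [hcross, norm_smul, hp1, Real.norm_eq_abs, abs_of_pos (mul_pos hr0 hr0), mul_one]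
  have hT : (‖deriv c s‖)⁻¹ • deriv c s = γ s := by
    rw [hn1, hdcs, smul_smul, inv_mul_cancel₀ hr0.ne', one_smul]
  have hB : (‖cross3 (deriv c s) (deriv (deriv c) s)‖)⁻¹ •
      cross3 (deriv c s) (deriv (deriv c) s) = cross3 (γ s) (deriv γ s) := by
    rw [hn2, hcross, smul_smul, inv_mul_cancel₀ (mul_pos hr0 hr0).ne', one_smul]
  refine ⟨hT, hB, ?_⟩
  rw [hT, hB, my_cross3_cross3, hγγ, hγ'γ, one_smul, zero_smul, sub_zero]
end

section
/- The curve α : ℝ → ℝ³ given by α₁(s) = −2√(2/3) cos(√3 s) sin(√2 s) + 2 cos(√2 s) sin(√3 s), α₂(s) = −(2/3)(3 cos(√2 s) cos(√3 s) + √6 sin(√2 s) sin(√3 s)), α₃(s) = (2/√3) sin(√2 s) satisfies α'(s) = 2 cos(√2 s) γ(s) where γ(s) = ((1/√3) cos(√3 s), (1/√3) sin(√3 s), √(2/3)); consequently ‖α(s)‖ = 2 on any interval where cos(√2 s) ≠ 0, i.e. α lies on the sphere of radius 2 centered at the origin. -/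
/-! The explicit curve is `b ∫ cos (k s) γ(s) ds` for the circle `γ` of height `k / ω` and
radius `1 / ω` on the unit sphere, with `b = 2`, `k = √2`, `ω = √3`. Its first two
coordinates have squared sum `b² (cos² (k s) + (k/ω)² sin² (k s))` and the third squares to
`b² sin² (k s) / ω²`, so `ω² = 1 + k²` makes `‖α‖² = b²` identically. -/

open Real

noncomputable section

theorem smul_mk3 (c x y z : ℝ) : c • mk3 x y z = mk3 (c * x) (c * y) (c * z) := by
  apply (WithLp.equiv 2 (Fin 3 → ℝ)).injective
  funext i
  fin_cases i <;> simp [mk3]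

theorem norm_mk3 (x y z : ℝ) : ‖mk3 x y z‖ = √(x ^ 2 + y ^ 2 + z ^ 2) := by
  simp [mk3, EuclideanSpace.norm_eq, Fin.sum_univ_three, sq_abs]

theorem HasDerivAt.mk3 {f g h : ℝ → ℝ} {f' g' h' s : ℝ}
    (hf : HasDerivAt f f' s) (hg : HasDerivAt g g' s) (hh : HasDerivAt h h' s) :
    HasDerivAt (fun u => mk3 (f u) (g u) (h u)) (mk3 f' g' h') s := by
  have hp : HasDerivAt (fun u => ![f u, g u, h u]) ![f', g', h'] s := by
    rw [hasDerivAt_pi]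
    intro i
    fin_cases i <;> simpa
  exact ((EuclideanSpace.equiv (Fin 3) ℝ).symm : (Fin 3 → ℝ) →L[ℝ] E3).hasFDerivAt.comp_hasDerivAt
    s hp

/-- For `ω ^ 2 = 1 + k ^ 2` this is a unit speed circle of geodesic curvature `k` on the unit
sphere. -/
def sphericalCircle (k ω s : ℝ) : E3 :=
  mk3 (1 / ω * cos (ω * s)) (1 / ω * sin (ω * s)) (k / ω)

/-- The construction `c(s) = b ∫ cos (k s) γ(s) ds` (with `b₁ = 0`, `b₂ = 1`, `a = 0`) applied to
`γ = sphericalCircle k ω`. -/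
def sphericalHelix (b k ω s : ℝ) : E3 :=
  mk3 (b * (cos (k * s) * sin (ω * s) - k / ω * cos (ω * s) * sin (k * s)))
    (-b * (cos (k * s) * cos (ω * s) + k / ω * sin (k * s) * sin (ω * s)))
    (b / ω * sin (k * s))

section

variable {k ω : ℝ} (b : ℝ)

theorem hasDerivAt_sphericalHelix (hω : ω ^ 2 = 1 + k ^ 2) (s : ℝ) :
    HasDerivAt (sphericalHelix b k ω) ((b * cos (k * s)) • sphericalCircle k ω s) s := by
  have hωinv : ω * ω⁻¹ = 1 := mul_inv_cancel₀ (by rintro rfl; nlinarith)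
  have hk := (hasDerivAt_id s).const_mul k
  have hw := (hasDerivAt_id s).const_mul ω
  simp only [id, mul_one] at hk hw
  rw [sphericalCircle, smul_mk3]
  refine HasDerivAt.mk3 ?_ ?_ ?_
  · refine ((hk.cos.mul hw.sin).sub ((hw.cos.const_mul (k / ω)).mul hk.sin)).const_mul b
      |>.congr_deriv ?_
    linear_combination
      (b * k * sin (k * s) * sin (ω * s) - b * cos (k * s) * cos (ω * s) * ω) * hωinv +
      b * cos (k * s) * cos (ω * s) * ω⁻¹ * hω
  · refine ((hk.cos.mul hw.cos).add ((hk.sin.const_mul (k / ω)).mul hw.sin)).const_mul (-b)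
      |>.congr_deriv ?_
    linear_combination
      -(b * k * sin (k * s) * cos (ω * s) + b * cos (k * s) * sin (ω * s) * ω) * hωinv +
      b * cos (k * s) * sin (ω * s) * ω⁻¹ * hω
  · refine (hk.sin.const_mul (b / ω)).congr_deriv ?_
    ring

theorem norm_sphericalHelix (hω : ω ^ 2 = 1 + k ^ 2) (s : ℝ) :
    ‖sphericalHelix b k ω s‖ = |b| := by
  have hωinv : ω * ω⁻¹ = 1 := mul_inv_cancel₀ (by rintro rfl; nlinarith)
  rw [sphericalHelix, norm_mk3, ← sqrt_sq_eq_abs]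
  congr 1
  linear_combination
    b ^ 2 * (cos (k * s) ^ 2 + k ^ 2 * ω⁻¹ ^ 2 * sin (k * s) ^ 2) * sin_sq_add_cos_sq (ω * s) +
    b ^ 2 * sin_sq_add_cos_sq (k * s) - b ^ 2 * sin (k * s) ^ 2 * ω⁻¹ ^ 2 * hω +
    b ^ 2 * sin (k * s) ^ 2 * (ω * ω⁻¹ + 1) * hωinv

end

end

/-- The explicit curve α satisfies α'(s) = 2 cos(√2 s) γ(s), where γ is the
circle γ(s) = ((1/√3) cos(√3 s), (1/√3) sin(√3 s), √(2/3)) on the unit sphere; consequently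
‖α(s)‖ = 2 wherever cos(√2 s) ≠ 0, i.e. α lies on the sphere of radius 2 centered at 0. -/
theorem example_spherical_helix :
    ∀ s : ℝ,
      HasDerivAt
        (fun u : ℝ => mk3
          (-2 * Real.sqrt (2 / 3) * Real.cos (Real.sqrt 3 * u) * Real.sin (Real.sqrt 2 * u) +
            2 * Real.cos (Real.sqrt 2 * u) * Real.sin (Real.sqrt 3 * u))
          (-(2 / 3) * (3 * Real.cos (Real.sqrt 2 * u) * Real.cos (Real.sqrt 3 * u) +
            Real.sqrt 6 * Real.sin (Real.sqrt 2 * u) * Real.sin (Real.sqrt 3 * u)))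
          ((2 / Real.sqrt 3) * Real.sin (Real.sqrt 2 * u)))
        ((2 * Real.cos (Real.sqrt 2 * s)) •
          mk3 ((1 / Real.sqrt 3) * Real.cos (Real.sqrt 3 * s))
            ((1 / Real.sqrt 3) * Real.sin (Real.sqrt 3 * s))
            (Real.sqrt (2 / 3))) s ∧
      (Real.cos (Real.sqrt 2 * s) ≠ 0 →
        ‖mk3
          (-2 * Real.sqrt (2 / 3) * Real.cos (Real.sqrt 3 * s) * Real.sin (Real.sqrt 2 * s) +
            2 * Real.cos (Real.sqrt 2 * s) * Real.sin (Real.sqrt 3 * s))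
          (-(2 / 3) * (3 * Real.cos (Real.sqrt 2 * s) * Real.cos (Real.sqrt 3 * s) +
            Real.sqrt 6 * Real.sin (Real.sqrt 2 * s) * Real.sin (Real.sqrt 3 * s)))
          ((2 / Real.sqrt 3) * Real.sin (Real.sqrt 2 * s))‖ = 2) := by
  intro s
  have hω : √3 ^ 2 = 1 + √2 ^ 2 := by norm_num
  have h23 : √(2 / 3) = √2 / √3 := sqrt_div (by norm_num) 3
  have h23' : √2 / √3 = √2 * √3 / 3 := by field_simp; norm_num
  have h6 : √6 = √2 * √3 := by rw [← sqrt_mul (by norm_num)]; norm_num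
  refine ⟨?_, fun _ => ?_⟩
  · convert hasDerivAt_sphericalHelix 2 hω s using 1
    · funext u
      rw [sphericalHelix, h23, h23', h6]
      congr 1 <;> ring
    · rw [sphericalCircle, h23]
  · convert norm_sphericalHelix 2 hω s using 2
    · rw [sphericalHelix, h23, h23', h6]
      congr 1 <;> ring
    · norm_num
end
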